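/- arXiv:2208.04500 — 3 statements merged into one kernel-verified Lean document; each statement's English description precedes it below -/
import Mathlib

section
/- (Lemma 1) Let ℓ_l and ℓ_r be positive integers with ℓ_l = ℓ_r or ℓ_l = ℓ_r + 1. Let v_l ∈ F₂^{ℓ_l} have Hamming weight d_l and v_r ∈ F₂^{ℓ_r} have Hamming weight d_r. Then, averaging over all ℓ_l! permutations π of {0,…,ℓ_l−1}, the following polynomial identity holds in ℚ[Y]: (1/ℓ_l!) · Σ_π Y^{w_H(v_l + π·pad(v_r)) + d_r} = Σ_{k = max(0, d_l + d_r − ℓ_l)}^{min(d_l, d_r)} [ C(d_l, k)·C(ℓ_l − d_l, d_r − k) / C(ℓ_l, d_r) ] · Y^{d_l + 2d_r − 2k}. -/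
/-!
Write `A` and `T` for the supports of `v_l` and `pad v_r`. Over `𝔽₂` the weight of
`v_l + π·pad v_r` is `d_l + d_r - 2 |A ∩ πT|`, so the summand depends on `π` only through the
`d_r`-set `πT`. Since the symmetric group acts transitively on `d_r`-subsets, `πT` is uniformly
distributed among them, and exactly `C(d_l, k) C(ℓ_l - d_l, d_r - k)` of them meet `A` in `k`
points.
-/

/-- `pad l r v` extends `v ∈ 𝔽₂^r` to a vector in `𝔽₂^l` by appending zero coordinates.
When `l = r` it is `v` itself; when `l = r + 1` it is `v` extended by one zero. -/
def pad (l r : ℕ) (v : Fin r → ZMod 2) : Fin l → ZMod 2 :=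
  fun i => if h : (i : ℕ) < r then v ⟨i, h⟩ else 0

open Finset Pointwise

namespace MulAction

variable {G X M : Type*} [Group G] [Fintype G] [MulAction G X] [IsPretransitive G X] [Fintype X]
  [DecidableEq X] [AddCommMonoid M]

theorem sum_smul_eq_card_stabilizer_smul_sum (f : X → M) (x : X) :
    ∑ g : G, f (g • x) = #{g : G | g • x = x} • ∑ y, f y := by
  have hfiber : ∀ y, #{g : G | g • x = y} = #{g : G | g • x = x} := by
    intro y
    obtain ⟨h, rfl⟩ := exists_smul_eq G x y
    refine card_nbij' (h⁻¹ * ·) (h * ·) ?_ ?_ ?_ ?_ <;> intro g <;>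
      simp [mul_smul, inv_smul_eq_iff]
  rw [← sum_fiberwise univ (· • x), smul_sum]
  refine sum_congr rfl fun y _ ↦ ?_
  rw [sum_congr rfl fun g hg ↦ congrArg f (mem_filter.1 hg).2, sum_const, hfiber]

theorem card_smul_sum_smul (f : X → M) (x : X) :
    Fintype.card X • ∑ g : G, f (g • x) = Fintype.card G • ∑ y, f y := by
  have hcard := sum_smul_eq_card_stabilizer_smul_sum (G := G) (fun _ ↦ 1) x
  simp only [sum_const, card_univ, smul_eq_mul, mul_one] at hcard
  rw [sum_smul_eq_card_stabilizer_smul_sum, smul_smul, hcard, mul_comm]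

end MulAction

variable {α : Type*} [Fintype α] [DecidableEq α]

namespace Finset

theorem choose_card_smul_sum_perm_smul {M : Type*} [AddCommMonoid M] (T : Finset α)
    (f : Finset α → M) :
    (Fintype.card α).choose #T • ∑ π : Equiv.Perm α, f (π • T)
      = (Fintype.card α).factorial • ∑ S ∈ powersetCard #T univ, f S := by
  have := Set.powersetCard.isPretransitive (α := α) (n := #T)
  have h := MulAction.card_smul_sum_smul (G := Equiv.Perm α)
    (fun S : Set.powersetCard α #T ↦ f S) ⟨T, rfl⟩
  rw [Fintype.card_eq_nat_card, Set.powersetCard.card, Nat.card_eq_fintype_card,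
    Fintype.card_perm] at h
  simp only [Set.powersetCard.coe_smul] at h
  rw [h, sum_subtype (p := (· ∈ Set.powersetCard α #T)) _
    (by simp [Set.powersetCard.mem_iff]) f]

theorem inv_factorial_smul_sum_perm_smul {M : Type*} [AddCommGroup M] [Module ℚ M]
    (T : Finset α) (f : Finset α → M) :
    ((Fintype.card α).factorial : ℚ)⁻¹ • ∑ π : Equiv.Perm α, f (π • T)
      = ((Fintype.card α).choose #T : ℚ)⁻¹ • ∑ S ∈ powersetCard #T univ, f S := by
  have hchoose : ((Fintype.card α).choose #T : ℚ) ≠ 0 :=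
    Nat.cast_ne_zero.2 (Nat.choose_pos (card_le_univ T)).ne'
  have hfact : ((Fintype.card α).factorial : ℚ) ≠ 0 :=
    Nat.cast_ne_zero.2 (Nat.factorial_ne_zero _)
  have h := choose_card_smul_sum_perm_smul T f
  rw [← Nat.cast_smul_eq_nsmul ℚ, ← Nat.cast_smul_eq_nsmul ℚ] at h
  rw [inv_smul_eq_iff₀ hfact, smul_comm, eq_inv_smul_iff₀ hchoose, h]

theorem card_powersetCard_filter_card_inter (A : Finset α) {d k : ℕ} (hk : k ≤ d) :
    #{S ∈ powersetCard d univ | #(S ∩ A) = k}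
      = (#A).choose k * (Fintype.card α - #A).choose (d - k) := by
  rw [← card_compl, ← card_powersetCard, ← card_powersetCard, ← card_product]
  refine card_nbij' (fun S ↦ (S ∩ A, S \ A)) (fun P ↦ P.1 ∪ P.2) ?_ ?_ ?_ ?_
  · intro S hS
    simp only [mem_coe, mem_filter, mem_powersetCard, mem_product] at hS ⊢
    have := card_inter_add_card_sdiff S A
    exact ⟨⟨inter_subset_right, hS.2⟩, fun x hx ↦ by simp_all, by omega⟩
  · rintro ⟨P, Q⟩ hPQ
    simp only [mem_coe, mem_filter, mem_powersetCard, mem_product] at hPQ ⊢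
    obtain ⟨⟨hPA, hP⟩, hQA, hQ⟩ := hPQ
    have hQA' : Disjoint Q A := subset_compl_iff_disjoint_right.1 hQA
    rw [card_union_of_disjoint (disjoint_of_subset_left hPA hQA'.symm),
      union_inter_distrib_right, inter_eq_left.2 hPA, disjoint_iff_inter_eq_empty.1 hQA',
      union_empty]
    exact ⟨⟨subset_univ _, by omega⟩, hP⟩
  · intro S _
    exact sup_inf_sdiff S A
  · rintro ⟨P, Q⟩ hPQ
    simp only [mem_coe, mem_product, mem_powersetCard] at hPQ
    obtain ⟨⟨hPA, -⟩, hQA, -⟩ := hPQ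
    have hQA' : Disjoint Q A := subset_compl_iff_disjoint_right.1 hQA
    simp only [union_inter_distrib_right, union_sdiff_distrib, inter_eq_left.2 hPA,
      disjoint_iff_inter_eq_empty.1 hQA', sdiff_eq_empty_iff_subset.2 hPA,
      sdiff_eq_self_of_disjoint hQA', union_empty, empty_union]

theorem sum_powersetCard_card_inter {M : Type*} [AddCommMonoid M] (A : Finset α) (d : ℕ)
    (g : ℕ → M) :
    ∑ S ∈ powersetCard d univ, g #(S ∩ A)
      = ∑ k ∈ Icc (#A + d - Fintype.card α) (min #A d),
          ((#A).choose k * (Fintype.card α - #A).choose (d - k)) • g k := by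
  have hmaps : ∀ S ∈ powersetCard d univ,
      #(S ∩ A) ∈ Icc (#A + d - Fintype.card α) (min #A d) := by
    intro S hS
    rw [mem_powersetCard_univ] at hS
    have := card_union_add_card_inter S A
    have := card_le_univ (S ∪ A)
    have := card_le_card (inter_subset_left (s₁ := S) (s₂ := A))
    have := card_le_card (inter_subset_right (s₁ := S) (s₂ := A))
    simp only [mem_Icc]
    omega
  rw [← sum_fiberwise_of_maps_to hmaps]
  refine sum_congr rfl fun k hk ↦ ?_
  rw [sum_congr rfl fun S hS ↦ congrArg g (mem_filter.1 hS).2, sum_const,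
    card_powersetCard_filter_card_inter A ((mem_Icc.1 hk).2.trans (min_le_right _ _))]

end Finset

theorem filter_apply_perm_inv_ne_zero {M : Type*} [Zero M] [DecidableEq M] (w : α → M)
    (π : Equiv.Perm α) :
    ({i | w (π⁻¹ i) ≠ 0} : Finset α) = π • ({i | w i ≠ 0} : Finset α) := by
  ext i
  rw [← Finset.inv_smul_mem_iff]
  simp [Equiv.Perm.smul_def]

theorem hammingNorm_add_add_two_mul_card_inter (u v : α → ZMod 2) :
    hammingNorm (u + v) + 2 * #(({i | u i ≠ 0} : Finset α) ∩ ({i | v i ≠ 0} : Finset α))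
      = hammingNorm u + hammingNorm v := by
  simp only [hammingNorm, ← filter_and, card_filter, Pi.add_apply, mul_sum, ← sum_add_distrib]
  refine sum_congr rfl fun i _ ↦ ?_
  generalize u i = a, v i = b
  fin_cases a <;> fin_cases b <;> rfl

theorem hammingNorm_add_perm_inv (u w : α → ZMod 2) (π : Equiv.Perm α) :
    hammingNorm (u + fun i ↦ w (π⁻¹ i)) + 2 * #(π • ({i | w i ≠ 0} : Finset α) ∩ ({i | u i ≠ 0} : Finset α))
      = hammingNorm u + hammingNorm w := by
  have h := hammingNorm_add_add_two_mul_card_inter u (fun i ↦ w (π⁻¹ i))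
  have hperm : hammingNorm (fun i ↦ w (π⁻¹ i)) = hammingNorm w := by
    unfold hammingNorm
    rw [filter_apply_perm_inv_ne_zero, card_smul_finset]
  rwa [filter_apply_perm_inv_ne_zero, inter_comm, hperm] at h

theorem hammingNorm_pad {l r : ℕ} (h : r ≤ l) (v : Fin r → ZMod 2) :
    hammingNorm (pad l r v) = hammingNorm v := by
  rw [hammingNorm, hammingNorm, ← card_map (Fin.castLEEmb h)]
  congr 1
  ext i
  simp only [mem_filter, mem_univ, true_and, mem_map, Fin.castLEEmb_apply]
  unfold pad
  constructor
  · intro hi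
    split_ifs at hi with hir
    · exact ⟨⟨i, hir⟩, hi, rfl⟩
    · exact absurd rfl hi
  · rintro ⟨j, hj, rfl⟩
    simpa using hj

open Polynomial in
theorem average_weight_distribution_general (ll lr : ℕ)
    (hcase : ll = lr ∨ ll = lr + 1)
    (vl : Fin ll → ZMod 2) (vr : Fin lr → ZMod 2) (dl dr : ℕ)
    (hdl : hammingNorm vl = dl) (hdr : hammingNorm vr = dr) :
    (1 / (ll.factorial : ℚ)) •
        ∑ π : Equiv.Perm (Fin ll),
          (X : ℚ[X]) ^ (hammingNorm (vl + fun i => pad ll lr vr (π⁻¹ i)) + dr)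
      = ∑ k ∈ Finset.Icc (dl + dr - ll) (min dl dr),
          ((dl.choose k * (ll - dl).choose (dr - k) : ℚ) / (ll.choose dr : ℚ)) •
            (X : ℚ[X]) ^ (dl + 2 * dr - 2 * k) := by
  set A : Finset (Fin ll) := {i | vl i ≠ 0}
  set T : Finset (Fin ll) := {i | pad ll lr vr i ≠ 0}
  have hA : #A = dl := hdl
  have hT : #T = dr := (hammingNorm_pad (by omega) vr).trans hdr
  have hexp : ∀ π : Equiv.Perm (Fin ll),
      hammingNorm (vl + fun i => pad ll lr vr (π⁻¹ i)) + dr = dl + 2 * dr - 2 * #(π • T ∩ A) := by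
    intro π
    have h : hammingNorm (vl + fun i => pad ll lr vr (π⁻¹ i)) + 2 * #(π • T ∩ A) = dl + dr :=
      (hammingNorm_add_perm_inv vl _ π).trans (by rw [hammingNorm_pad (by omega), hdl, hdr])
    omega
  have havg := inv_factorial_smul_sum_perm_smul T
    (fun S ↦ (X : ℚ[X]) ^ (dl + 2 * dr - 2 * #(S ∩ A)))
  simp only [Fintype.card_fin, hT] at havg
  rw [sum_congr rfl fun π _ ↦ congrArg (X ^ ·) (hexp π), one_div, havg,
    sum_powersetCard_card_inter A dr (fun k ↦ (X : ℚ[X]) ^ (dl + 2 * dr - 2 * k)), hA,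
    Fintype.card_fin, smul_sum]
  refine sum_congr rfl fun k _ ↦ ?_
  rw [← Nat.cast_smul_eq_nsmul ℚ, smul_smul]
  push_cast
  rw [div_eq_inv_mul]

open Polynomial in
/-- **Lemma 1.** For `v_l ∈ 𝔽₂^{ℓ_l}` of weight `d_l` and `v_r ∈ 𝔽₂^{ℓ_r}`
of weight `d_r` (with `ℓ_l = ℓ_r` or `ℓ_l = ℓ_r + 1`), averaging over all `ℓ_l!`
permutations `π`:
`(1/ℓ_l!) Σ_π Y^{w_H(v_l + π·pad(v_r)) + d_r}
  = Σ_k [C(d_l,k) C(ℓ_l−d_l, d_r−k) / C(ℓ_l,d_r)] Y^{d_l+2d_r−2k}`,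
with `k` ranging from `max(0, d_l+d_r−ℓ_l)` to `min(d_l, d_r)`. -/
theorem average_weight_distribution (ll lr : ℕ) (hll : 0 < ll) (hlr : 0 < lr)
    (hcase : ll = lr ∨ ll = lr + 1)
    (vl : Fin ll → ZMod 2) (vr : Fin lr → ZMod 2) (dl dr : ℕ)
    (hdl : hammingNorm vl = dl) (hdr : hammingNorm vr = dr) :
    (1 / (ll.factorial : ℚ)) •
        ∑ π : Equiv.Perm (Fin ll),
          (X : ℚ[X]) ^ (hammingNorm (vl + fun i => pad ll lr vr (π⁻¹ i)) + dr)
      = ∑ k ∈ Finset.Icc (dl + dr - ll) (min dl dr),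
          ((dl.choose k * (ll - dl).choose (dr - k) : ℚ) / (ll.choose dr : ℚ)) •
            (X : ℚ[X]) ^ (dl + 2 * dr - 2 * k) :=
  average_weight_distribution_general ll lr hcase vl vr dl dr hdl hdr
end

section
/- (Theorem 1) Let ℓ_l and ℓ_r be positive integers with ℓ_l = ℓ_r or ℓ_l = ℓ_r + 1. Let C_l ⊆ F₂^{ℓ_l} and C_r ⊆ F₂^{ℓ_r} be finite sets of vectors, and for each d let B_l(d) = |{u ∈ C_l : w_H(u) = d}| and B_r(d) = |{v ∈ C_r : w_H(v) = d}|. Then in ℚ[Y]: (1/ℓ_l!) · Σ_{π} Σ_{u ∈ C_l} Σ_{v ∈ C_r} Y^{w_H(u + π·pad(v)) + w_H(v)} = Σ_{d_l = 0}^{ℓ_l} Σ_{d_r = 0}^{ℓ_r} B_l(d_l)·B_r(d_r) · Σ_{k = max(0, d_l + d_r − ℓ_l)}^{min(d_l, d_r)} [ C(d_l, k)·C(ℓ_l − d_l, d_r − k) / C(ℓ_l, d_r) ] · Y^{d_l + 2d_r − 2k}, where the outer sum Σ_π ranges over all permutations π of {0,…,ℓ_l−1}. -/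
open Finset
open scoped symmDiff

private lemma zmod2_add : ∀ a b : ZMod 2, (a + b ≠ 0) ↔ ¬((a ≠ 0) ↔ (b ≠ 0)) := by decide

private lemma hn_add {n : ℕ} (u w : Fin n → ZMod 2) :
    hammingNorm (u + w) =
      ((univ.filter fun i => u i ≠ 0) ∆ (univ.filter fun i => w i ≠ 0)).card := by
  have h : (univ.filter fun i => (u + w) i ≠ 0)
      = (univ.filter fun i => u i ≠ 0) ∆ (univ.filter fun i => w i ≠ 0) := by
    ext i
    simp only [mem_filter, mem_univ, true_and, Finset.mem_symmDiff, Pi.add_apply]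
    have := zmod2_add (u i) (w i)
    tauto
  rw [hammingNorm, h]

private lemma supp_perm {n : ℕ} (w : Fin n → ZMod 2) (π : Equiv.Perm (Fin n)) :
    (univ.filter fun i => w (π⁻¹ i) ≠ 0) = (univ.filter fun i => w i ≠ 0).image π := by
  ext i
  simp only [mem_filter, mem_univ, true_and, mem_image]
  constructor
  · intro h; exact ⟨π⁻¹ i, h, by simp⟩
  · rintro ⟨j, hj, rfl⟩; simpa using hj

private lemma hn_pad (ll lr : ℕ) (h : lr ≤ ll) (v : Fin lr → ZMod 2) :
    hammingNorm (pad ll lr v) = hammingNorm v := by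
  rw [hammingNorm, hammingNorm,
    ← Finset.card_map ⟨Fin.castLE h, Fin.castLE_injective h⟩]
  congr 1
  ext i
  simp only [mem_map, mem_filter, mem_univ, true_and, pad, Function.Embedding.coeFn_mk]
  constructor
  · intro hi
    by_cases hlt : (i : ℕ) < lr
    · refine ⟨⟨i, hlt⟩, by simpa [hlt] using hi, by ext; simp [Fin.castLE]⟩
    · simp [hlt] at hi
  · rintro ⟨j, hj, rfl⟩
    simpa [Fin.castLE, j.isLt] using hj

private lemma exists_perm_image {n : ℕ} {B T : Finset (Fin n)} (h : #B = #T) :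
    ∃ σ : Equiv.Perm (Fin n), B.image σ = T := by
  classical
  let e : {x // x ∈ B} ≃ {x // x ∈ T} := Finset.equivOfCardEq h
  refine ⟨Equiv.extendSubtype e, ?_⟩
  apply Finset.eq_of_subset_of_card_le
  · intro x hx
    rw [mem_image] at hx
    obtain ⟨y, hy, rfl⟩ := hx
    exact e.extendSubtype_mem y hy
  · rw [Finset.card_image_of_injective _ (Equiv.injective _), h]

private lemma sum_perm_image {n dr : ℕ} {M : Type*} [AddCommMonoid M]
    (B : Finset (Fin n)) (hB : #B = dr) (f : Finset (Fin n) → M) :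
    ∑ π : Equiv.Perm (Fin n), f (B.image π) =
      ∑ T ∈ powersetCard dr (univ : Finset (Fin n)),
        (dr.factorial * (n - dr).factorial) • f T := by
  classical
  have hdr : dr ≤ n := by
    rw [← hB]
    simpa using card_le_univ B
  have hmaps : ∀ π ∈ (univ : Finset (Equiv.Perm (Fin n))),
      B.image π ∈ powersetCard dr (univ : Finset (Fin n)) := by
    intro π _
    rw [mem_powersetCard]
    exact ⟨subset_univ _, by rw [card_image_of_injective _ π.injective, hB]⟩
  rw [← Finset.sum_fiberwise_of_maps_to hmaps]
  -- all fibers have the same card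
  have hconst : ∀ T ∈ powersetCard dr (univ : Finset (Fin n)),
      ∀ T' ∈ powersetCard dr (univ : Finset (Fin n)),
      #(univ.filter fun π : Equiv.Perm (Fin n) => B.image π = T)
        = #(univ.filter fun π : Equiv.Perm (Fin n) => B.image π = T') := by
    intro T hT T' hT'
    obtain ⟨σ, hσ⟩ := exists_perm_image (B := T) (T := T')
      (by rw [(mem_powersetCard.mp hT).2, (mem_powersetCard.mp hT').2])
    refine Finset.card_bij' (fun π _ => σ * π) (fun π _ => σ⁻¹ * π) ?_ ?_ ?_ ?_
    · intro π hπ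
      simp only [mem_filter, mem_univ, true_and] at hπ ⊢
      rw [Equiv.Perm.coe_mul, ← Finset.image_image, hπ, hσ]
    · intro π hπ
      simp only [mem_filter, mem_univ, true_and] at hπ ⊢
      rw [Equiv.Perm.coe_mul, ← Finset.image_image, hπ, ← hσ, Finset.image_image,
        show (⇑σ⁻¹ ∘ ⇑σ) = id from funext fun x => by simp, Finset.image_id]
    · intro π _
      simp [← mul_assoc]
    · intro π _
      simp [← mul_assoc]
  have htot : ∑ T ∈ powersetCard dr (univ : Finset (Fin n)),
      #(univ.filter fun π : Equiv.Perm (Fin n) => B.image π = T) = n.factorial := by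
    rw [← Finset.card_eq_sum_card_fiberwise hmaps, card_univ, Fintype.card_perm,
      Fintype.card_fin]
  refine Finset.sum_congr rfl fun T hT => ?_
  have hc : ∀ π ∈ univ.filter (fun π : Equiv.Perm (Fin n) => B.image π = T),
      f (B.image π) = f T := fun π hπ => by rw [(mem_filter.mp hπ).2]
  rw [Finset.sum_congr rfl hc, Finset.sum_const]
  congr 1
  -- fiber card equals dr! * (n - dr)!
  have h1 : n.choose dr * #(univ.filter fun π : Equiv.Perm (Fin n) => B.image π = T)
      = n.factorial := by
    rw [← htot, Finset.sum_congr rfl (fun T' hT' => hconst T' hT' T hT), Finset.sum_const,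
      smul_eq_mul, card_powersetCard, card_univ, Fintype.card_fin]
  have h2 : n.choose dr * (dr.factorial * (n - dr).factorial) = n.factorial := by
    rw [← Nat.choose_mul_factorial_mul_factorial hdr]
    ring
  exact Nat.eq_of_mul_eq_mul_left (Nat.choose_pos hdr) (by rw [h1, h2])

private lemma fiber_card {n dl dr k : ℕ} (A : Finset (Fin n)) (hA : #A = dl)
    (hk : k ≤ dl) (hk' : k ≤ dr) :
    #((powersetCard dr (univ : Finset (Fin n))).filter fun T => #(A ∩ T) = k)
      = dl.choose k * (n - dl).choose (dr - k) := by
  classical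
  have hprod : dl.choose k * (n - dl).choose (dr - k)
      = #((powersetCard k A) ×ˢ (powersetCard (dr - k) Aᶜ)) := by
    rw [card_product, card_powersetCard, card_powersetCard, card_compl, hA,
      Fintype.card_fin]
  rw [hprod]
  refine Finset.card_bij' (fun T _ => (T ∩ A, T \ A)) (fun P _ => P.1 ∪ P.2) ?_ ?_ ?_ ?_
  · intro T hT
    rw [mem_filter, mem_powersetCard] at hT
    obtain ⟨⟨-, hTcard⟩, hTk⟩ := hT
    rw [mem_product]
    constructor
    · rw [mem_powersetCard]
      exact ⟨inter_subset_right, by rw [inter_comm]; exact hTk⟩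
    · rw [mem_powersetCard]
      refine ⟨fun x hx => ?_, ?_⟩
      · rw [mem_sdiff] at hx
        rw [mem_compl]
        exact hx.2
      · show #(T \ A) = dr - k
        have := card_sdiff_add_card_inter T A
        rw [inter_comm T A, hTk, hTcard] at this
        omega
  · intro P hP
    rw [mem_product, mem_powersetCard, mem_powersetCard] at hP
    obtain ⟨⟨hP1, hP1c⟩, hP2, hP2c⟩ := hP
    have hdisj : Disjoint P.1 P.2 := by
      rw [Finset.disjoint_left]
      intro x hx1 hx2
      exact (mem_compl.mp (hP2 hx2)) (hP1 hx1)
    have hAP : A ∩ (P.1 ∪ P.2) = P.1 := by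
      ext x
      have h1 := @hP1 x
      have h2 := @hP2 x
      simp only [mem_inter, mem_union, mem_compl] at *
      tauto
    rw [mem_filter, mem_powersetCard]
    refine ⟨⟨subset_univ _, ?_⟩, by rw [hAP, hP1c]⟩
    rw [card_union_of_disjoint hdisj, hP1c, hP2c]
    omega
  · intro T hT
    dsimp only
    ext x
    simp only [mem_union, mem_inter, mem_sdiff]
    tauto
  · intro P hP
    rw [mem_product, mem_powersetCard, mem_powersetCard] at hP
    obtain ⟨⟨hP1, hP1c⟩, hP2, hP2c⟩ := hP
    have e1 : (P.1 ∪ P.2) ∩ A = P.1 := by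
      ext x
      have h1 := @hP1 x
      have h2 := @hP2 x
      simp only [mem_inter, mem_union, mem_compl] at *
      tauto
    have e2 : (P.1 ∪ P.2) \ A = P.2 := by
      ext x
      have h1 := @hP1 x
      have h2 := @hP2 x
      simp only [mem_sdiff, mem_union, mem_compl] at *
      tauto
    rw [e1, e2]

open Polynomial in
private lemma sum_pcs {n dl dr : ℕ} (A : Finset (Fin n)) (hA : #A = dl) (hdr : dr ≤ n) :
    ∑ T ∈ powersetCard dr (univ : Finset (Fin n)), (X : ℚ[X]) ^ ((A ∆ T).card + dr) =
      ∑ k ∈ Finset.Icc (dl + dr - n) (min dl dr),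
        (dl.choose k * (n - dl).choose (dr - k)) •
          (X : ℚ[X]) ^ (dl + 2 * dr - 2 * k) := by
  classical
  have hmaps : ∀ T ∈ powersetCard dr (univ : Finset (Fin n)),
      #(A ∩ T) ∈ Finset.Icc (dl + dr - n) (min dl dr) := by
    intro T hT
    rw [mem_powersetCard] at hT
    obtain ⟨-, hTc⟩ := hT
    rw [Finset.mem_Icc]
    have h1 : #(A ∩ T) + #(A ∪ T) = #A + #T := card_inter_add_card_union A T
    have h2 : #(A ∪ T) ≤ n := by simpa using card_le_univ (A ∪ T)
    have h3 : #(A ∩ T) ≤ #A := card_le_card inter_subset_left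
    have h4 : #(A ∩ T) ≤ #T := card_le_card inter_subset_right
    omega
  rw [← Finset.sum_fiberwise_of_maps_to hmaps]
  refine Finset.sum_congr rfl fun k hk => ?_
  rw [Finset.mem_Icc] at hk
  obtain ⟨hk1, hk2⟩ := hk
  have hkdl : k ≤ dl := le_trans hk2 (min_le_left _ _)
  have hkdr : k ≤ dr := le_trans hk2 (min_le_right _ _)
  have hconst : ∀ T ∈ (powersetCard dr (univ : Finset (Fin n))).filter
      (fun T => #(A ∩ T) = k),
      (X : ℚ[X]) ^ ((A ∆ T).card + dr) = (X : ℚ[X]) ^ (dl + 2 * dr - 2 * k) := by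
    intro T hT
    rw [mem_filter, mem_powersetCard] at hT
    obtain ⟨⟨-, hTc⟩, hTk⟩ := hT
    congr 1
    have e1 : #(A \ T) + #(A ∩ T) = #A := card_sdiff_add_card_inter A T
    have e2 : #(T \ A) + #(T ∩ A) = #T := card_sdiff_add_card_inter T A
    rw [inter_comm T A] at e2
    have e3 : (A ∆ T).card = #(A \ T) + #(T \ A) := by
      rw [symmDiff_def, sup_eq_union]
      exact card_union_of_disjoint (disjoint_sdiff_sdiff)
    omega
  rw [Finset.sum_congr rfl hconst, Finset.sum_const, fiber_card A hA hkdl hkdr]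

open Polynomial in
private lemma key {n : ℕ} (u w : Fin n → ZMod 2) :
    (1 / (n.factorial : ℚ)) •
        ∑ π : Equiv.Perm (Fin n),
          (X : ℚ[X]) ^ (hammingNorm (u + fun i => w (π⁻¹ i)) + hammingNorm w)
      = ∑ k ∈ Finset.Icc (hammingNorm u + hammingNorm w - n)
            (min (hammingNorm u) (hammingNorm w)),
          (((hammingNorm u).choose k * (n - hammingNorm u).choose (hammingNorm w - k) : ℚ)
              / (n.choose (hammingNorm w) : ℚ)) •
            (X : ℚ[X]) ^ (hammingNorm u + 2 * hammingNorm w - 2 * k) := by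
  classical
  set dl := hammingNorm u with hdl
  set dr := hammingNorm w with hdrdef
  set A := univ.filter (fun i => u i ≠ 0) with hAdef
  set B := univ.filter (fun i => w i ≠ 0) with hBdef
  have hA : #A = dl := rfl
  have hB : #B = dr := rfl
  have hdr : dr ≤ n := by
    rw [← hB]
    simpa using card_le_univ B
  have hrw : ∑ π : Equiv.Perm (Fin n),
        (X : ℚ[X]) ^ (hammingNorm (u + fun i => w (π⁻¹ i)) + dr)
      = ∑ π : Equiv.Perm (Fin n), (X : ℚ[X]) ^ ((A ∆ (B.image π)).card + dr) := by
    refine Finset.sum_congr rfl fun π _ => ?_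
    rw [hn_add, supp_perm]
  rw [hrw, sum_perm_image B hB (fun T => (X : ℚ[X]) ^ ((A ∆ T).card + dr)),
    ← Finset.smul_sum, sum_pcs A hA hdr]
  rw [← Nat.cast_smul_eq_nsmul ℚ, smul_smul, Finset.smul_sum]
  have hCpos : (0 : ℚ) < (n.choose dr : ℚ) := by
    exact_mod_cast Nat.choose_pos hdr
  have hfac : (n.factorial : ℚ)
      = (n.choose dr : ℚ) * ((dr.factorial * (n - dr).factorial : ℕ) : ℚ) := by
    have h := Nat.choose_mul_factorial_mul_factorial hdr
    exact_mod_cast (show n.factorial = n.choose dr * (dr.factorial * (n - dr).factorial) by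
      rw [← h]; ring)
  have hfacpos : (0 : ℚ) < ((dr.factorial * (n - dr).factorial : ℕ) : ℚ) := by
    exact_mod_cast Nat.mul_pos (Nat.factorial_pos _) (Nat.factorial_pos _)
  refine Finset.sum_congr rfl fun k hk => ?_
  rw [← Nat.cast_smul_eq_nsmul ℚ, smul_smul]
  congr 1
  rw [hfac]
  push_cast
  field_simp

open Polynomial in
private noncomputable def Gaux (ll dl dr : ℕ) : ℚ[X] :=
  ∑ k ∈ Finset.Icc (dl + dr - ll) (min dl dr),
    ((dl.choose k * (ll - dl).choose (dr - k) : ℚ) / (ll.choose dr : ℚ)) •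
      (X : ℚ[X]) ^ (dl + 2 * dr - 2 * k)

open Polynomial in
/-- **Theorem 1.** Let `C_l ⊆ 𝔽₂^{ℓ_l}` and `C_r ⊆ 𝔽₂^{ℓ_r}` have weight
enumerators `B_l`, `B_r` (with `ℓ_l = ℓ_r` or `ℓ_l = ℓ_r + 1`). Then the average (over a
uniform permutation `π`) weight enumerating function of the parent labels
`(u + π·pad(v), v)` is
`Σ_{d_l} Σ_{d_r} B_l(d_l) B_r(d_r) Σ_k [C(d_l,k) C(ℓ_l−d_l,d_r−k)/C(ℓ_l,d_r)] Y^{d_l+2d_r−2k}`. -/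
theorem average_WEF_parent (ll lr : ℕ) (hll : 0 < ll) (hlr : 0 < lr)
    (hcase : ll = lr ∨ ll = lr + 1)
    (Cl : Finset (Fin ll → ZMod 2)) (Cr : Finset (Fin lr → ZMod 2))
    (Bl Br : ℕ → ℕ)
    (hBl : ∀ d, Bl d = (Cl.filter fun u => hammingNorm u = d).card)
    (hBr : ∀ d, Br d = (Cr.filter fun v => hammingNorm v = d).card) :
    (1 / (ll.factorial : ℚ)) •
        ∑ π : Equiv.Perm (Fin ll), ∑ u ∈ Cl, ∑ v ∈ Cr,
          (X : ℚ[X]) ^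
            (hammingNorm (u + fun i => pad ll lr v (π⁻¹ i)) + hammingNorm v)
      = ∑ dl ∈ Finset.range (ll + 1), ∑ dr ∈ Finset.range (lr + 1),
          ((Bl dl : ℚ) * (Br dr : ℚ)) •
            ∑ k ∈ Finset.Icc (dl + dr - ll) (min dl dr),
              ((dl.choose k * (ll - dl).choose (dr - k) : ℚ) / (ll.choose dr : ℚ)) •
                (X : ℚ[X]) ^ (dl + 2 * dr - 2 * k) := by
  classical
  have hle : lr ≤ ll := by omega
  have hmapsCl : ∀ u ∈ Cl, hammingNorm u ∈ Finset.range (ll + 1) := by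
    intro u _
    rw [Finset.mem_range]
    have := hammingNorm_le_card_fintype (x := u)
    simp only [Fintype.card_fin] at this
    omega
  have hmapsCr : ∀ v ∈ Cr, hammingNorm v ∈ Finset.range (lr + 1) := by
    intro v _
    rw [Finset.mem_range]
    have := hammingNorm_le_card_fintype (x := v)
    simp only [Fintype.card_fin] at this
    omega
  have hGdef : ∀ dl dr : ℕ,
      (∑ k ∈ Finset.Icc (dl + dr - ll) (min dl dr),
        ((dl.choose k * (ll - dl).choose (dr - k) : ℚ) / (ll.choose dr : ℚ)) •
          (X : ℚ[X]) ^ (dl + 2 * dr - 2 * k)) = Gaux ll dl dr := fun _ _ => rfl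
  simp only [hGdef]
  calc
    (1 / (ll.factorial : ℚ)) •
        ∑ π : Equiv.Perm (Fin ll), ∑ u ∈ Cl, ∑ v ∈ Cr,
          (X : ℚ[X]) ^
            (hammingNorm (u + fun i => pad ll lr v (π⁻¹ i)) + hammingNorm v)
      = ∑ u ∈ Cl, ∑ v ∈ Cr, (1 / (ll.factorial : ℚ)) •
          ∑ π : Equiv.Perm (Fin ll),
            (X : ℚ[X]) ^
              (hammingNorm (u + fun i => pad ll lr v (π⁻¹ i)) + hammingNorm v) := by
        rw [Finset.sum_comm]
        rw [Finset.smul_sum]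
        refine Finset.sum_congr rfl fun u _ => ?_
        rw [Finset.sum_comm, Finset.smul_sum]
    _ = ∑ u ∈ Cl, ∑ v ∈ Cr, Gaux ll (hammingNorm u) (hammingNorm v) := by
        refine Finset.sum_congr rfl fun u _ => Finset.sum_congr rfl fun v _ => ?_
        have h := key (n := ll) u (pad ll lr v)
        rw [hn_pad ll lr hle v] at h
        exact h
    _ = ∑ dl ∈ Finset.range (ll + 1), ∑ dr ∈ Finset.range (lr + 1),
          ((Bl dl : ℚ) * (Br dr : ℚ)) • Gaux ll dl dr := by
        symm
        calc
          ∑ dl ∈ Finset.range (ll + 1), ∑ dr ∈ Finset.range (lr + 1),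
              ((Bl dl : ℚ) * (Br dr : ℚ)) • Gaux ll dl dr
            = ∑ dl ∈ Finset.range (ll + 1),
                (Cl.filter fun u => hammingNorm u = dl).card •
                  ∑ dr ∈ Finset.range (lr + 1),
                    (Cr.filter fun v => hammingNorm v = dr).card • Gaux ll dl dr := by
              refine Finset.sum_congr rfl fun dl _ => ?_
              rw [Finset.smul_sum]
              refine Finset.sum_congr rfl fun dr _ => ?_
              rw [hBl, hBr, mul_smul, Nat.cast_smul_eq_nsmul, Nat.cast_smul_eq_nsmul]
          _ = ∑ dl ∈ Finset.range (ll + 1),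
                (Cl.filter fun u => hammingNorm u = dl).card •
                  ∑ v ∈ Cr, Gaux ll dl (hammingNorm v) := by
              refine Finset.sum_congr rfl fun dl _ => ?_
              congr 1
              rw [← Finset.sum_fiberwise_of_maps_to' hmapsCr (fun d => Gaux ll dl d)]
              exact Finset.sum_congr rfl fun dr _ => (Finset.sum_const _).symm
          _ = ∑ u ∈ Cl, ∑ v ∈ Cr, Gaux ll (hammingNorm u) (hammingNorm v) := by
              rw [← Finset.sum_fiberwise_of_maps_to' hmapsCl
                (fun d => ∑ v ∈ Cr, Gaux ll d (hammingNorm v))]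
              exact Finset.sum_congr rfl fun dl _ => (Finset.sum_const _).symm
end

section
/- Let E_N : F₂^N → F₂^N be defined recursively by E_1 = identity and, for N ≥ 2 with N_l = ⌈N/2⌉ and N_r = ⌊N/2⌋, E_N(w) = ( E_{N_l}(w_l) + pad(E_{N_r}(w_r)), E_{N_r}(w_r) ), where w_l and w_r are the first N_l and last N_r coordinates of w and pad appends a zero coordinate exactly when N_l = N_r + 1. Let G_N be the N × N matrix over F₂ defined recursively by G_1 = (1) and, for N ≥ 2, the block matrix with blocks G_{N_l} (upper-left), zero (upper-right), G_{N_r} (lower-right), and lower-left block G_{N_r} if N is even or G_{N_r} with one all-zero column appended if N is odd. Then for every positive integer N and every w ∈ F₂^N, E_N(w) = w · G_N (row vector times matrix). -/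
/-- The balanced-binary-tree (BBT) polar encoding map `E_N : 𝔽₂^N → 𝔽₂^N`:
`E_1 = id` and, for `N ≥ 2` with `N_l = ⌈N/2⌉`, `N_r = ⌊N/2⌋`,
`E_N(w) = (E_{N_l}(w_l) + pad(E_{N_r}(w_r)), E_{N_r}(w_r))`. -/
def bbtEncode : (N : ℕ) → (Fin N → ZMod 2) → Fin N → ZMod 2
  | 0, w => w
  | 1, w => w
  | n + 2, w =>
    let el := bbtEncode ((n + 3) / 2)
      (fun i => w ⟨(i : ℕ), by have := i.isLt; omega⟩)
    let er := bbtEncode ((n + 2) / 2)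
      (fun i => w ⟨(n + 3) / 2 + (i : ℕ), by have := i.isLt; omega⟩)
    (Fin.append (el + pad ((n + 3) / 2) ((n + 2) / 2) er) er) ∘
      Fin.cast (by omega : n + 2 = (n + 3) / 2 + (n + 2) / 2)
  termination_by N => N
  decreasing_by all_goals omega

/-- The generator matrix `G_N` of the length-`N` BBT polar code (Algorithm 1 of the paper):
`G_1 = (1)` and, for `N ≥ 2` with `N_l = ⌈N/2⌉`, `N_r = ⌊N/2⌋`, `G_N` is the block matrix
with upper-left block `G_{N_l}`, upper-right block zero, lower-right block `G_{N_r}`, and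
lower-left block `G_{N_r}` (with one all-zero column appended on the right if `N` is odd). -/
def bbtGenMat : (N : ℕ) → Matrix (Fin N) (Fin N) (ZMod 2)
  | 0 => 1
  | 1 => 1
  | n + 2 =>
    let Gl := bbtGenMat ((n + 3) / 2)
    let Gr := bbtGenMat ((n + 2) / 2)
    Matrix.of fun i j : Fin (n + 2) =>
      if hi : (i : ℕ) < (n + 3) / 2 then
        if hj : (j : ℕ) < (n + 3) / 2 then Gl ⟨(i : ℕ), hi⟩ ⟨(j : ℕ), hj⟩ else 0
      else
        if hj : (j : ℕ) < (n + 3) / 2 then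
          if hj' : (j : ℕ) < (n + 2) / 2 then
            Gr ⟨(i : ℕ) - (n + 3) / 2, by have := i.isLt; omega⟩ ⟨(j : ℕ), hj'⟩
          else 0
        else
          Gr ⟨(i : ℕ) - (n + 3) / 2, by have := i.isLt; omega⟩
            ⟨(j : ℕ) - (n + 3) / 2, by have := j.isLt; omega⟩
  termination_by N => N
  decreasing_by all_goals omega

lemma fin_append_apply {α : Type*} {m n : ℕ} (u : Fin m → α) (v : Fin n → α)
    (i : Fin (m + n)) :
    Fin.append u v i =
      if h : (i : ℕ) < m then u ⟨i, h⟩ else v ⟨(i : ℕ) - m, by have := i.isLt; omega⟩ := by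
  rcases Nat.lt_or_ge (i : ℕ) m with h | h
  · rw [dif_pos h]
    have : i = Fin.castAdd n ⟨(i : ℕ), h⟩ := by ext; rfl
    conv_lhs => rw [this]
    rw [Fin.append_left]
  · rw [dif_neg (not_lt.2 h)]
    have : i = Fin.natAdd m ⟨(i : ℕ) - m, by have := i.isLt; omega⟩ := by
      ext; simp; omega
    conv_lhs => rw [this]
    rw [Fin.append_right]

lemma bbt_aux : (N : ℕ) → (w : Fin N → ZMod 2) →
    bbtEncode N w = Matrix.vecMul w (bbtGenMat N)
  | 0, w => funext fun i => i.elim0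
  | 1, w => by
    funext i
    rw [bbtEncode, bbtGenMat, Matrix.vecMul_one]
  | n + 2, w => by
    have hsum : n + 2 = (n + 3) / 2 + (n + 2) / 2 := by omega
    have ihl := bbt_aux ((n + 3) / 2) (fun i => w ⟨(i : ℕ), by have := i.isLt; omega⟩)
    have ihr := bbt_aux ((n + 2) / 2)
      (fun i => w ⟨(n + 3) / 2 + (i : ℕ), by have := i.isLt; omega⟩)
    funext j
    rw [bbtEncode, bbtGenMat]
    simp only [Matrix.vecMul, dotProduct, Function.comp_apply]
    rw [fin_append_apply, ihl, ihr]
    simp only [Matrix.of_apply, Fin.coe_cast]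
    have hsplit : ∀ f : Fin (n + 2) → ZMod 2,
        ∑ i : Fin (n + 2), f i =
          (∑ i : Fin ((n + 3) / 2), f ⟨(i : ℕ), by have := i.isLt; omega⟩) +
          ∑ i : Fin ((n + 2) / 2), f ⟨(n + 3) / 2 + (i : ℕ), by have := i.isLt; omega⟩ := by
      intro f
      rw [← Equiv.sum_comp (finCongr hsum.symm) f, Fin.sum_univ_add]
      congr 1
    rw [hsplit]
    by_cases hj : (j : ℕ) < (n + 3) / 2
    · rw [dif_pos hj]
      by_cases hj' : (j : ℕ) < (n + 2) / 2
      · simp [pad, Matrix.vecMul, dotProduct, hj, hj']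
      · simp [pad, Matrix.vecMul, dotProduct, hj, hj']
    · rw [dif_neg hj]
      simp [pad, Matrix.vecMul, dotProduct, hj]

/-- For every positive integer `N` and every `w ∈ 𝔽₂^N`, the BBT tree
encoding coincides with multiplication by the generator matrix: `E_N(w) = w · G_N`
(row vector times matrix). -/
theorem bbtEncode_eq_vecMul (N : ℕ) (hN : 0 < N) (w : Fin N → ZMod 2) :
    bbtEncode N w = Matrix.vecMul w (bbtGenMat N) := bbt_aux N w
end
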